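/- If R is finitely generated as a commutative ring (i.e. R is a finitely generated ℤ-algebra), then the group St_{B₂}(R) is finitely generated. -/

import Mathlib

/-! Finite generation of the Steinberg group of type `B₂` over a finitely generated
commutative ring. -/

namespace PaperAmalgams

open scoped commutatorElement

/-- Generators of the Steinberg group of type `B₂`: `S`, `S′` and the `X(t)`, `X′(t)`
(unprimed = short simple root, primed = long simple root). -/
inductive B2Gen (R : Type*)
  | S : B2Gen R
  | S' : B2Gen R
  | X : R → B2Gen R
  | X' : R → B2Gen R

/-- The defining relators of `St_{B₂}(R)`: for all `t, u ∈ R`,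
`S S′ S S′ = S′ S S′ S`; `S² ⇄ S′`; `S′² S S′⁻² = S⁻¹`;
`X(t) X(u) = X(t+u)` (& primed); `S² ⇄ X(t)` (& primed); `S² ⇄ X′(t)`;
`S′² X(t) S′⁻² = X(−t)`; `S S′ S ⇄ X′(t)` (& primed);
`S X′(t) S⁻¹ ⇄ S′ X(u) S′⁻¹`; `X′(t) ⇄ S X′(u) S⁻¹`;
`[X(t), S′ X(u) S′⁻¹] = S X′(−2 t u) S⁻¹`;
`[X(t), X′(u)] = S′ X(−t u) S′⁻¹ ⬝ S X′(t² u) S⁻¹`;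
`S = X(1) S X(1) S⁻¹ X(1)` (& primed). -/
def b2FullRels (R : Type*) [CommRing R] : Set (FreeGroup (B2Gen R)) :=
  let S : FreeGroup (B2Gen R) := .of .S
  let S' : FreeGroup (B2Gen R) := .of .S'
  let X : R → FreeGroup (B2Gen R) := fun t => .of (.X t)
  let X' : R → FreeGroup (B2Gen R) := fun t => .of (.X' t)
  {S * S' * S * S' * (S' * S * S' * S)⁻¹,
   ⁅S ^ 2, S'⁆,
   S' ^ 2 * S * (S' ^ 2)⁻¹ * S,
   S * (X 1 * S * X 1 * S⁻¹ * X 1)⁻¹,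
   S' * (X' 1 * S' * X' 1 * S'⁻¹ * X' 1)⁻¹} ∪
  (⋃ (t : R),
    {⁅S ^ 2, X t⁆,
     ⁅S' ^ 2, X' t⁆,
     ⁅S ^ 2, X' t⁆,
     S' ^ 2 * X t * (S' ^ 2)⁻¹ * (X (-t))⁻¹,
     ⁅S * S' * S, X' t⁆,
     ⁅S' * S * S', X t⁆}) ∪
  (⋃ (t : R) (u : R),
    {X t * X u * (X (t + u))⁻¹,
     X' t * X' u * (X' (t + u))⁻¹,
     ⁅S * X' t * S⁻¹, S' * X u * S'⁻¹⁆,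
     ⁅X' t, S * X' u * S⁻¹⁆,
     (X t * (S' * X u * S'⁻¹) * (X t)⁻¹ * (S' * X u * S'⁻¹)⁻¹) *
       (S * X' (-(2 * t * u)) * S⁻¹)⁻¹,
     (X t * X' u * (X t)⁻¹ * (X' u)⁻¹) *
       (S' * X (-(t * u)) * S'⁻¹ * (S * X' (t ^ 2 * u) * S⁻¹))⁻¹})

/-- The Steinberg group `St_{B₂}(R)`. -/
abbrev StB2Full (R : Type*) [CommRing R] : Type _ := PresentedGroup (b2FullRels R)

end PaperAmalgams

/-
Let `H` be the subgroup generated by `S`, `S′`, `X(1)` and the `X′(m)`, `m` running over the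
squarefree products of finitely many ring generators of `R`. The relation
`[X(t), X′(u)] = S′ X(−tu) S′⁻¹ · S X′(t²u) S⁻¹` shows, for `t = 1`, that `X′(u) ∈ H` implies
`X(u) ∈ H`, and then that `X′(u), X′(gu) ∈ H` imply `X′(g²u) ∈ H` for each ring generator `g`.
From the squarefree products this reaches every monomial in the generators, hence, `X′` being
additive, all of `R`; so `H` contains every generator of `St_{B₂}(R)`.
-/

theorem Submonoid.closure_subset_of_sq_mul_mem {M : Type*} [CommMonoid M] {s A : Set M}
    (hprod : ∀ u : Finset M, ↑u ⊆ s → ∏ x ∈ u, x ∈ A)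
    (hsq : ∀ x ∈ s, ∀ r ∈ A, x * r ∈ A → x ^ 2 * r ∈ A) :
    (Submonoid.closure s : Set M) ⊆ A := by
  classical
  -- Multiplying by `x ∈ s` either enlarges the squarefree factor or, when `x` already occurs
  -- in it, is an instance of `hsq`.
  suffices h : ∀ m ∈ Submonoid.closure s, ∀ u : Finset M, ↑u ⊆ s → m * ∏ x ∈ u, x ∈ A by
    intro m hm
    simpa using h m hm ∅ (by simp)
  intro m hm
  induction hm using Submonoid.closure_induction_left with
  | one => simpa using hprod
  | mul_left x hx m _ ih =>
    intro u hu
    by_cases hxu : x ∈ u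
    · have hsplit : ∏ y ∈ u, y = x * ∏ y ∈ u.erase x, y := (Finset.mul_prod_erase u id hxu).symm
      have hr := ih (u.erase x) ((Finset.coe_subset.2 (Finset.erase_subset x u)).trans hu)
      have hxr : x * (m * ∏ y ∈ u.erase x, y) ∈ A := by
        rw [mul_left_comm, ← hsplit]; exact ih u hu
      convert hsq x hx _ hr hxr using 1
      rw [hsplit, sq]; ac_rfl
    · have hins : ↑(insert x u) ⊆ s := by
        rw [Finset.coe_insert]; exact Set.insert_subset hx hu
      convert ih _ hins using 1
      rw [Finset.prod_insert hxu]; ac_rfl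

theorem AddSubgroup.eq_top_of_closure_subset_of_adjoin_eq_top {R : Type*} [CommRing R]
    {A : AddSubgroup R} {s : Set R} (hs : Algebra.adjoin ℤ s = ⊤)
    (hA : (Submonoid.closure s : Set R) ⊆ A) : A = ⊤ := by
  rw [eq_top_iff]
  intro r _
  have hr : r ∈ Subalgebra.toSubmodule (Algebra.adjoin ℤ s) := by simp [hs]
  rw [Algebra.adjoin_eq_span] at hr
  exact (Submodule.span_le (p := A.toIntSubmodule)).2 hA hr

namespace PaperAmalgams.StB2Full

open scoped commutatorElement

variable {R : Type*} [CommRing R]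

def S : StB2Full R := PresentedGroup.of .S

def S' : StB2Full R := PresentedGroup.of .S'

def X (t : R) : StB2Full R := PresentedGroup.of (.X t)

def X' (t : R) : StB2Full R := PresentedGroup.of (.X' t)

theorem X_mul_X (t u : R) : X t * X u = X (t + u) :=
  PresentedGroup.mk_eq_mk_of_mul_inv_mem <|
    Set.mem_union_right _ <| Set.mem_iUnion₂_of_mem (i := t) u (Set.mem_insert _ _)

theorem X'_mul_X' (t u : R) : X' t * X' u = X' (t + u) :=
  PresentedGroup.mk_eq_mk_of_mul_inv_mem <|
    Set.mem_union_right _ <| Set.mem_iUnion₂_of_mem (i := t) u <| by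
      simp only [Set.mem_insert_iff, Set.mem_singleton_iff, true_or, or_true]

theorem commutator_X_X' (t u : R) :
    ⁅X t, X' u⁆ = S' * X (-(t * u)) * S'⁻¹ * (S * X' (t ^ 2 * u) * S⁻¹) := by
  have h := PresentedGroup.mk_eq_mk_of_mul_inv_mem (rels := b2FullRels R)
    (x := FreeGroup.of (.X t) * FreeGroup.of (.X' u) * (FreeGroup.of (.X t))⁻¹ *
      (FreeGroup.of (.X' u))⁻¹)
    (y := FreeGroup.of .S' * FreeGroup.of (.X (-(t * u))) * (FreeGroup.of .S')⁻¹ *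
      (FreeGroup.of .S * FreeGroup.of (.X' (t ^ 2 * u)) * (FreeGroup.of .S)⁻¹))
    (Set.mem_union_right _ <| Set.mem_iUnion₂_of_mem (i := t) u <| by
      simp only [Set.mem_insert_iff, Set.mem_singleton_iff, or_true])
  simp only [map_mul, map_inv] at h
  rw [commutatorElement_def]
  exact h

theorem X_zero : X (0 : R) = 1 :=
  mul_eq_left.1 (by rw [X_mul_X, add_zero] : X (0 : R) * X 0 = X 0)

theorem X'_zero : X' (0 : R) = 1 :=
  mul_eq_left.1 (by rw [X'_mul_X', add_zero] : X' (0 : R) * X' 0 = X' 0)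

theorem X_neg (t : R) : X (-t) = (X t)⁻¹ :=
  eq_inv_of_mul_eq_one_left (by rw [X_mul_X, neg_add_cancel, X_zero])

theorem X'_neg (t : R) : X' (-t) = (X' t)⁻¹ :=
  eq_inv_of_mul_eq_one_left (by rw [X'_mul_X', neg_add_cancel, X'_zero])

section Subgroup

variable {H : Subgroup (StB2Full R)}

theorem X'_sq_mul_mem (hS : S ∈ H) (hS' : S' ∈ H) {t u : R} (ht : X t ∈ H) (hu : X' u ∈ H)
    (htu : X (t * u) ∈ H) : X' (t ^ 2 * u) ∈ H := by
  have key : X' (t ^ 2 * u) = S⁻¹ * ((S' * (X (t * u))⁻¹ * S'⁻¹)⁻¹ * ⁅X t, X' u⁆) * S := by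
    rw [commutator_X_X', X_neg]
    group
  rw [key, commutatorElement_def]
  simp [Subgroup.mul_mem_cancel_left, Subgroup.mul_mem_cancel_right, *]

theorem X_mem_of_X'_mem (hS : S ∈ H) (hS' : S' ∈ H) (hX1 : X 1 ∈ H) {u : R} (hu : X' u ∈ H) :
    X u ∈ H := by
  have key : X u = (S'⁻¹ * (⁅X (1 : R), X' u⁆ * (S * X' u * S⁻¹)⁻¹) * S')⁻¹ := by
    rw [commutator_X_X', one_mul, one_pow, one_mul, X_neg]
    group
  rw [key, commutatorElement_def]
  simp [Subgroup.mul_mem_cancel_left, Subgroup.mul_mem_cancel_right, *]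

variable (H) in
def comapX' : AddSubgroup R where
  carrier := {u | X' u ∈ H}
  add_mem' {a b} ha hb := show X' (a + b) ∈ H by rw [← X'_mul_X']; exact H.mul_mem ha hb
  zero_mem' := show X' 0 ∈ H by rw [X'_zero]; exact H.one_mem
  neg_mem' {a} ha := show X' (-a) ∈ H by rw [X'_neg]; exact H.inv_mem ha

theorem subgroup_eq_top_of_adjoin_eq_top {s : Set R} (hs : Algebra.adjoin ℤ s = ⊤) (hS : S ∈ H)
    (hS' : S' ∈ H) (hX1 : X 1 ∈ H) (hprod : ∀ u : Finset R, ↑u ⊆ s → X' (∏ x ∈ u, x) ∈ H) :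
    H = ⊤ := by
  have hX' : comapX' H = ⊤ := by
    refine AddSubgroup.eq_top_of_closure_subset_of_adjoin_eq_top hs
      (Submonoid.closure_subset_of_sq_mul_mem hprod fun x hx r hr hxr => ?_)
    have hx' : X' x ∈ H := by simpa using hprod {x} (by simpa using hx)
    exact X'_sq_mul_mem hS hS' (X_mem_of_X'_mem hS hS' hX1 hx') hr
      (X_mem_of_X'_mem hS hS' hX1 hxr)
  have hX'_mem (r : R) : X' r ∈ H := (hX' ▸ AddSubgroup.mem_top r : r ∈ comapX' H)
  rw [eq_top_iff, ← PresentedGroup.closure_range_of, Subgroup.closure_le]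
  rintro _ ⟨g, rfl⟩
  cases g with
  | S => exact hS
  | S' => exact hS'
  | X r => exact X_mem_of_X'_mem hS hS' hX1 (hX'_mem r)
  | X' r => exact hX'_mem r

end Subgroup

end PaperAmalgams.StB2Full

open PaperAmalgams in
/-- If `R` is a finitely generated commutative ring (finitely generated as a
`ℤ`-algebra), then `St_{B₂}(R)` is finitely generated. -/
theorem stB2_fg_of_finiteType {R : Type*} [CommRing R] [Algebra.FiniteType ℤ R] :
    Group.FG (StB2Full R) := by
  open StB2Full in
  obtain ⟨s, hs⟩ := Algebra.FiniteType.out (R := ℤ) (A := R)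
  let gens : Set (StB2Full R) := {S, S', X 1} ∪ (fun u => X' (∏ x ∈ u, x)) '' ↑s.powerset
  refine Group.fg_iff.2 ⟨gens, ?_, (Set.toFinite _).union (s.powerset.finite_toSet.image _)⟩
  refine subgroup_eq_top_of_adjoin_eq_top hs ?_ ?_ ?_ fun u hu => Subgroup.subset_closure ?_
  · exact Subgroup.subset_closure (by simp [gens])
  · exact Subgroup.subset_closure (by simp [gens])
  · exact Subgroup.subset_closure (by simp [gens])
  · exact Or.inr ⟨u, Finset.mem_coe.2 (Finset.mem_powerset.2 (Finset.coe_subset.1 hu)), rfl⟩
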